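/- Let $X_i^m$ ($i \geq 1$, $m \geq 1$) be, for each $m$, i.i.d. real random variables, and let $X$ be a real random variable with $\mathbb{E}(X) > 0$, such that for every $\lambda \in \mathbb{R}$ the Laplace transform $\mathbb{E}(e^{-\lambda X_1^m})$ converges to $\mathbb{E}(e^{-\lambda X})$ as $m \to \infty$. Then for any real $a$ with $0 < a < \mathbb{E}(X)$, there exist $\theta > 0$ and $m_0 \geq 0$ such that for all $m \geq m_0$ and all $k \geq 0$, writing $S_k^m = \sum_{i=1}^k X_i^m$, one has $\mathbb{P}(S_k^m < k a) \leq e^{-k\theta}$. -/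

import Mathlib

/-!
Chernoff's method. Since `E[X] > a`, the function `t ↦ e^{ta} E[e^{-tX}]` equals `1` at `t = 0`
and has derivative `a - E[X] < 0` there, so it is `< ρ < 1` at some `t > 0`. By convergence of
the Laplace transforms, the same bound holds for `X₁^m` once `m` is large, and Markov's
inequality applied to `e^{-t S_k^m}` gives `ℙ(S_k^m < k a) ≤ ρ^k`.
-/

open MeasureTheory Finset Filter ProbabilityTheory Real

section Chernoff

variable {Ω : Type*} [MeasurableSpace Ω] {μ : Measure Ω}

lemma exists_pos_exp_mul_mgf_neg_lt_one [IsProbabilityMeasure μ] {X : Ω → ℝ} {a : ℝ}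
    (hX : 0 ∈ interior (integrableExpSet X μ)) (ha : a < μ[X]) :
    ∃ t, 0 < t ∧ exp (t * a) * mgf X μ (-t) < 1 := by
  set g : ℝ → ℝ := fun s ↦ exp (s * a) * mgf X μ (-s)
  have hmgf : HasDerivAt (mgf X μ) μ[X] (-0) := by
    rw [neg_zero, ← deriv_mgf_zero hX]
    exact (differentiableAt_mgf hX).hasDerivAt
  have hg : HasDerivAt g (a - μ[X]) 0 := by
    have hexp : HasDerivAt (fun s ↦ exp (s * a)) a 0 := by
      simpa using ((hasDerivAt_id (0 : ℝ)).mul_const a).exp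
    have hmgf_neg : HasDerivAt (fun s ↦ mgf X μ (-s)) (μ[X] * -1) 0 :=
      hmgf.comp 0 (hasDerivAt_neg 0)
    exact (hexp.mul hmgf_neg).congr_deriv (by simp; ring)
  have hg0 : g 0 = 1 := by simp [g]
  obtain ⟨t, hslope, ht⟩ := ((hg.hasDerivWithinAt (s := Set.Ioi 0)).limsup_slope_le'
    (lt_irrefl 0) (sub_neg.mpr ha) |>.and self_mem_nhdsWithin).exists
  refine ⟨t, ht, ?_⟩
  rw [slope_def_field, hg0, div_neg_iff] at hslope
  rcases hslope with ⟨-, h⟩ | ⟨h, -⟩ <;> linarith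

lemma measureReal_sum_range_le_le_pow [IsFiniteMeasure μ] {X : ℕ → Ω → ℝ}
    (hmeas : ∀ i, Measurable (X i)) (hindep : iIndepFun X μ)
    (hident : ∀ i, IdentDistrib (X i) (X 0) μ μ) {t : ℝ} (ht : 0 ≤ t)
    (hint : Integrable (fun ω ↦ exp (-t * X 0 ω)) μ) (a : ℝ) (k : ℕ) :
    μ.real {ω | ∑ i ∈ range k, X i ω ≤ k * a} ≤
      (exp (t * a) * mgf (X 0) μ (-t)) ^ k := by
  have hint_sum : Integrable (fun ω ↦ exp (-t * (∑ i ∈ range k, X i) ω)) μ :=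
    hindep.integrable_exp_mul_sum hmeas fun i _ ↦
      ((hident i).comp (measurable_const_mul (-t)).exp).integrable_iff.mpr hint
  have hmgf_sum : mgf (∑ i ∈ range k, X i) μ (-t) = mgf (X 0) μ (-t) ^ k := by
    rw [hindep.mgf_sum hmeas, prod_congr rfl fun i _ ↦ mgf_congr_of_identDistrib _ _ (hident i) _,
      prod_const, card_range]
  calc μ.real {ω | ∑ i ∈ range k, X i ω ≤ k * a}
      = μ.real {ω | (∑ i ∈ range k, X i) ω ≤ k * a} := by simp only [Finset.sum_apply]
    _ ≤ exp (t * (k * a)) * mgf (∑ i ∈ range k, X i) μ (-t) := by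
      simpa using measure_le_le_exp_mul_mgf (k * a) (neg_nonpos.mpr ht) hint_sum
    _ = (exp (t * a) * mgf (X 0) μ (-t)) ^ k := by
      rw [hmgf_sum, mul_pow, ← exp_nat_mul, mul_left_comm]

end Chernoff

theorem stmt_0_general {Ω : Type*} [MeasurableSpace Ω] (μ : Measure Ω)
    [IsProbabilityMeasure μ] (X : ℕ → ℕ → Ω → ℝ) (X₀ : Ω → ℝ)
    (hmeas : ∀ m i, Measurable (X m i))
    (hindep : ∀ m, ProbabilityTheory.iIndepFun (X m) μ)
    (hident : ∀ m i, ProbabilityTheory.IdentDistrib (X m i) (X m 0) μ μ)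
    (hint : ∀ m (l : ℝ), Integrable (fun ω => Real.exp (-l * X m 0 ω)) μ)
    (hint₀ : ∀ l : ℝ, Integrable (fun ω => Real.exp (-l * X₀ ω)) μ)
    (hlap : ∀ l : ℝ,
      Tendsto (fun m => ∫ ω, Real.exp (-l * X m 0 ω) ∂μ) atTop
        (nhds (∫ ω, Real.exp (-l * X₀ ω) ∂μ))) :
    ∀ a : ℝ, 0 < a → a < ∫ ω, X₀ ω ∂μ →
      ∃ θ : ℝ, 0 < θ ∧ ∃ m₀ : ℕ, ∀ m, m₀ ≤ m → ∀ k : ℕ,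
        μ {ω | ∑ i ∈ Finset.range k, X m i ω < k * a} ≤
          ENNReal.ofReal (Real.exp (-(k : ℝ) * θ)) := by
  intro a _ ha
  have hX₀ : integrableExpSet X₀ μ = Set.univ :=
    Set.eq_univ_of_forall fun l ↦ by simpa [integrableExpSet] using hint₀ (-l)
  obtain ⟨t, ht, hr⟩ := exists_pos_exp_mul_mgf_neg_lt_one (by simp [hX₀]) ha
  obtain ⟨ρ, hrρ, hρ1⟩ := exists_between hr
  have hρ : 0 < ρ := (mul_nonneg (exp_pos _).le mgf_nonneg).trans_lt hrρ
  obtain ⟨m₀, hm₀⟩ :=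
    eventually_atTop.mp (((hlap t).const_mul (exp (t * a))).eventually_lt_const hrρ)
  refine ⟨-log ρ, neg_pos.mpr (log_neg hρ hρ1), m₀, fun m hm k ↦ ?_⟩
  calc μ {ω | ∑ i ∈ range k, X m i ω < k * a}
      ≤ μ {ω | ∑ i ∈ range k, X m i ω ≤ k * a} :=
        measure_mono (Set.ofPred_subset_ofPred.mpr fun _ ↦ le_of_lt)
    _ = ENNReal.ofReal (μ.real {ω | ∑ i ∈ range k, X m i ω ≤ k * a}) :=
        (ofReal_measureReal (measure_ne_top _ _)).symm
    _ ≤ ENNReal.ofReal (exp (-k * -log ρ)) := by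
      refine ENNReal.ofReal_le_ofReal ?_
      rw [neg_mul_neg, exp_nat_mul, exp_log hρ]
      refine (measureReal_sum_range_le_le_pow (hmeas m) (hindep m) (hident m) ht.le
        (hint m t) a k).trans ?_
      exact pow_le_pow_left₀ (mul_nonneg (exp_pos _).le mgf_nonneg) (hm₀ m hm).le k

/-- Chernoff-type bound, uniform in `m`: if for each `m` the `(X_i^m)_i` are
i.i.d. real random variables whose Laplace transforms `𝔼(e^{-λ X₁^m})`
converge, as `m → ∞`, to that of a random variable `X` with `𝔼(X) > 0`, then
for any `0 < a < 𝔼(X)` there exist `θ > 0` and `m₀` such that for all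
`m ≥ m₀` and all `k`, `ℙ(S_k^m < k a) ≤ e^{-kθ}`, where
`S_k^m = ∑_{i=1}^k X_i^m`. -/
theorem stmt_0 {Ω : Type*} [MeasurableSpace Ω] (μ : Measure Ω)
    [IsProbabilityMeasure μ] (X : ℕ → ℕ → Ω → ℝ) (X₀ : Ω → ℝ)
    (hmeas : ∀ m i, Measurable (X m i)) (hmeas₀ : Measurable X₀)
    (hindep : ∀ m, ProbabilityTheory.iIndepFun (X m) μ)
    (hident : ∀ m i, ProbabilityTheory.IdentDistrib (X m i) (X m 0) μ μ)
    (hint : ∀ m (l : ℝ), Integrable (fun ω => Real.exp (-l * X m 0 ω)) μ)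
    (hint₀ : ∀ l : ℝ, Integrable (fun ω => Real.exp (-l * X₀ ω)) μ)
    (hlap : ∀ l : ℝ,
      Tendsto (fun m => ∫ ω, Real.exp (-l * X m 0 ω) ∂μ) atTop
        (nhds (∫ ω, Real.exp (-l * X₀ ω) ∂μ)))
    (hX₀int : Integrable X₀ μ) (hmean : 0 < ∫ ω, X₀ ω ∂μ) :
    ∀ a : ℝ, 0 < a → a < ∫ ω, X₀ ω ∂μ →
      ∃ θ : ℝ, 0 < θ ∧ ∃ m₀ : ℕ, ∀ m, m₀ ≤ m → ∀ k : ℕ,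
        μ {ω | ∑ i ∈ Finset.range k, X m i ω < k * a} ≤
          ENNReal.ofReal (Real.exp (-(k : ℝ) * θ)) :=
  stmt_0_general μ X X₀ hmeas hindep hident hint hint₀ hlap
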